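/- arXiv:2008.07020 — 10 statements merged into one kernel-verified Lean document; each statement's English description precedes it below -/
import Mathlib

section
/- Let (A,μ,α,β) be a BiHom-alternative algebra and let α',β': A→A be algebra homomorphisms (linear maps with α'(μ(x,y))=μ(α'(x),α'(y)) and β'(μ(x,y))=μ(β'(x),β'(y))) such that any two of the maps α,β,α',β' commute. Then A_{α',β'} = (A, μ_{α',β'}, α∘α', β∘β'), where μ_{α',β'}(x,y) = μ(α'(x),β'(y)), is a BiHom-alternative algebra. Moreover, if (B,μ',γ,δ) is another BiHom-alternative algebra, γ',δ' are algebra endomorphisms of B such that any two of the maps γ,δ,γ',δ' commute, and f: A→B is a morphism of BiHom-algebras with f∘α' = γ'∘f and f∘β' = δ'∘f, then f is also a morphism of BiHom-algebras from A_{α',β'} to B_{γ',δ'}. -/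
open TensorProduct

/-- A two-argument map is `K`-bilinear. -/
def IsBilin (K : Type*) {M N P : Type*} [Field K]
    [AddCommGroup M] [Module K M] [AddCommGroup N] [Module K N]
    [AddCommGroup P] [Module K P] (f : M → N → P) : Prop :=
  (∀ m, IsLinearMap K (f m)) ∧ (∀ n, IsLinearMap K (fun m => f m n))

/-- The BiHom-associator of a BiHom-algebra. -/
def biHomAssoc {A : Type*} [AddCommGroup A]
    (μ : A → A → A) (α β : A → A) (x y z : A) : A :=
  μ (μ x y) (β z) - μ (α x) (μ y z)

/-- BiHom-alternative algebra: multiplicative BiHom-algebra satisfying the left and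
right BiHom-alternative identities. -/
def IsBiHomAlternative (K : Type*) {A : Type*} [Field K]
    [AddCommGroup A] [Module K A]
    (μ : A → A → A) (α β : A → A) : Prop :=
  IsBilin K μ ∧ IsLinearMap K α ∧ IsLinearMap K β ∧
  (∀ x, α (β x) = β (α x)) ∧
  (∀ x y, α (μ x y) = μ (α x) (α y)) ∧
  (∀ x y, β (μ x y) = μ (β x) (β y)) ∧
  (∀ x y z, biHomAssoc μ α β (β x) (α y) z + biHomAssoc μ α β (β y) (α x) z = 0) ∧
  (∀ x y z, biHomAssoc μ α β x (β y) (α z) + biHomAssoc μ α β x (β z) (α y) = 0)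

/-- BiHom-associative algebra. -/
def IsBiHomAssociative (K : Type*) {A : Type*} [Field K]
    [AddCommGroup A] [Module K A]
    (μ : A → A → A) (α β : A → A) : Prop :=
  IsBilin K μ ∧ IsLinearMap K α ∧ IsLinearMap K β ∧
  (∀ x, α (β x) = β (α x)) ∧
  (∀ x y, α (μ x y) = μ (α x) (α y)) ∧
  (∀ x y, β (μ x y) = μ (β x) (β y)) ∧
  (∀ x y z, biHomAssoc μ α β x y z = 0)

/-- BiHom-Jordan algebra: multiplicative, BiHom-commutative and satisfying the
BiHom-Jordan identity. -/
def IsBiHomJordan (K : Type*) {A : Type*} [Field K]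
    [AddCommGroup A] [Module K A]
    (μ : A → A → A) (α β : A → A) : Prop :=
  IsBilin K μ ∧ IsLinearMap K α ∧ IsLinearMap K β ∧
  (∀ x, α (β x) = β (α x)) ∧
  (∀ x y, α (μ x y) = μ (α x) (α y)) ∧
  (∀ x y, β (μ x y) = μ (β x) (β y)) ∧
  (∀ x y, μ (β x) (α y) = μ (β y) (α x)) ∧
  (∀ x y, biHomAssoc μ α β (μ (β (β x)) (α (β x))) (α (α (β y))) (α (α (α x))) = 0)

/-- Module BiHom-associator, arguments (v, x, y) with v ∈ V, x, y ∈ A. -/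
def asVr {A V : Type*} [AddCommGroup A] [AddCommGroup V]
    (μ : A → A → A) (β : A → A) (φ : V → V) (ρr : V → A → V)
    (v : V) (x y : A) : V :=
  ρr (ρr v x) (β y) - ρr (φ v) (μ x y)

/-- Module BiHom-associator, arguments (x, v, y) with x, y ∈ A, v ∈ V. -/
def asVm {A V : Type*} [AddCommGroup A] [AddCommGroup V]
    (α β : A → A) (ρl : A → V → V) (ρr : V → A → V)
    (x : A) (v : V) (y : A) : V :=
  ρr (ρl x v) (β y) - ρl (α x) (ρr v y)

/-- Module BiHom-associator, arguments (x, y, v) with x, y ∈ A, v ∈ V. -/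
def asVl {A V : Type*} [AddCommGroup A] [AddCommGroup V]
    (μ : A → A → A) (α : A → A) (ψ : V → V) (ρl : A → V → V)
    (x y : A) (v : V) : V :=
  ρl (μ x y) (ψ v) - ρl (α x) (ρl y v)

/-- (V, φ, ψ) together with ρl, ρr is an A-bimodule in the BiHom-module sense:
the structure maps are bilinear morphisms of BiHom-modules. -/
def AreBiHomStructureMaps (K : Type*) {A V : Type*} [Field K]
    [AddCommGroup A] [Module K A] [AddCommGroup V] [Module K V]
    (α β : A → A) (φ ψ : V → V) (ρl : A → V → V) (ρr : V → A → V) : Prop :=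
  IsBilin K ρl ∧ IsBilin K ρr ∧ IsLinearMap K φ ∧ IsLinearMap K ψ ∧
  (∀ v, φ (ψ v) = ψ (φ v)) ∧
  (∀ x v, φ (ρl x v) = ρl (α x) (φ v)) ∧
  (∀ x v, ψ (ρl x v) = ρl (β x) (ψ v)) ∧
  (∀ v x, φ (ρr v x) = ρr (φ v) (α x)) ∧
  (∀ v x, ψ (ρr v x) = ρr (ψ v) (β x))

/-- BiHom-alternative bimodule over a BiHom-alternative algebra. -/
def IsBiHomAlternativeBimodule (K : Type*) {A V : Type*} [Field K]
    [AddCommGroup A] [Module K A] [AddCommGroup V] [Module K V]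
    (μ : A → A → A) (α β : A → A) (φ ψ : V → V)
    (ρl : A → V → V) (ρr : V → A → V) : Prop :=
  AreBiHomStructureMaps K α β φ ψ ρl ρr ∧
  (∀ x v, asVl μ α ψ ρl (β x) (α x) v = 0) ∧
  (∀ x v, asVr μ β φ ρr v (β x) (α x) = 0) ∧
  (∀ x y v, asVm α β ρl ρr (β x) (φ v) y = - asVr μ β φ ρr (ψ v) (α x) y) ∧
  (∀ x y v, asVl μ α ψ ρl y (β x) (φ v) = - asVm α β ρl ρr y (ψ v) (α x))

/-- BiHom-Jordan bimodule over a BiHom-Jordan algebra. -/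
def IsBiHomJordanBimodule (K : Type*) {A V : Type*} [Field K]
    [AddCommGroup A] [Module K A] [AddCommGroup V] [Module K V]
    (μ : A → A → A) (α β : A → A) (φ ψ : V → V)
    (ρl : A → V → V) (ρr : V → A → V) : Prop :=
  AreBiHomStructureMaps K α β φ ψ ρl ρr ∧
  (∀ x v, ρl (β x) (φ v) = ρr (ψ v) (α x)) ∧
  (∀ x y z v,
    asVm α β ρl ρr (μ (β (β x)) (α (β y))) (φ (φ (ψ v))) (α (α (α z)))
    + asVm α β ρl ρr (μ (β (β y)) (α (β z))) (φ (φ (ψ v))) (α (α (α x)))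
    + asVm α β ρl ρr (μ (β (β z)) (α (β x))) (φ (φ (ψ v))) (α (α (α y))) = 0) ∧
  (∀ x y z v,
    asVr μ β φ ρr (ρr (ψ (ψ v)) (β (α x))) (β (α (α y))) (α (α (α z)))
    + asVr μ β φ ρr (ρr (ψ (ψ v)) (β (α z))) (β (α (α y))) (α (α (α x)))
    + asVl μ α ψ ρl (μ (β (β x)) (β (α z))) (β (α (α y))) (φ (φ (φ v))) = 0)

/-- Right BiHom-Jordan module. -/
def IsRightBiHomJordanModule (K : Type*) {A V : Type*} [Field K]
    [AddCommGroup A] [Module K A] [AddCommGroup V] [Module K V]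
    (μ : A → A → A) (α β : A → A) (φ ψ : V → V) (ρr : V → A → V) : Prop :=
  IsBilin K ρr ∧
  (∀ v x, φ (ρr v x) = ρr (φ v) (α x)) ∧
  (∀ v x, ψ (ρr v x) = ρr (ψ v) (β x)) ∧
  (∀ x y z v,
    (ρr (ρr (φ (ψ (ψ v))) (μ (α (β x)) (α (α y)))) (β (α (α (α z))))
      - ρr (ρr (φ (ψ (ψ v))) (β (α (α z)))) (μ (α (α (β x))) (α (α (α y)))))
    + (ρr (ρr (φ (ψ (ψ v))) (μ (α (β y)) (α (α z)))) (β (α (α (α x))))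
      - ρr (ρr (φ (ψ (ψ v))) (β (α (α x)))) (μ (α (α (β y))) (α (α (α z)))))
    + (ρr (ρr (φ (ψ (ψ v))) (μ (α (β z)) (α (α x)))) (β (α (α (α y))))
      - ρr (ρr (φ (ψ (ψ v))) (β (α (α y)))) (μ (α (α (β z))) (α (α (α x))))) = 0) ∧
  (∀ x y z v,
    ρr (ρr (ρr (ψ (ψ v)) (β (α x))) (β (α (α y)))) (β (α (α (α z))))
    + ρr (ρr (ρr (ψ (ψ v)) (β (α z))) (β (α (α y)))) (β (α (α (α x))))
    + ρr (φ (φ (ψ (ψ v)))) (μ (μ (β (α x)) (α (α z))) (α (α (α y))))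
    = ρr (ρr (φ (ψ (ψ v))) (β (α (α x)))) (μ (β (α (α y))) (α (α (α z))))
    + ρr (ρr (φ (ψ (ψ v))) (β (α (α z)))) (μ (β (α (α y))) (α (α (α x))))
    + ρr (ρr (φ (ψ (ψ v))) (β (α (α y)))) (μ (α (α (β x))) (α (α (α z)))))

/-- Left BiHom-Jordan module (with a chosen inverse `ψinv` of `ψ`). -/
def IsLeftBiHomJordanModule (K : Type*) {A V : Type*} [Field K]
    [AddCommGroup A] [Module K A] [AddCommGroup V] [Module K V]
    (μ : A → A → A) (α β : A → A) (φ ψ ψinv : V → V) (ρl : A → V → V) : Prop :=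
  IsBilin K ρl ∧
  (∀ x v, φ (ρl x v) = ρl (α x) (φ v)) ∧
  (∀ x v, ψ (ρl x v) = ρl (β x) (ψ v)) ∧
  (∀ v, ψ (ψinv v) = v) ∧ (∀ v, ψinv (ψ v) = v) ∧
  (∀ x y z v,
    (ρl (β (β (α (α z)))) (ρl (μ (α (β x)) (α (α y))) (φ (φ (φ v))))
      - ρl (μ (α (β (β x))) (α (α (β y)))) (ρl (β (α (α z))) (φ (φ (φ v)))))
    + (ρl (β (β (α (α x)))) (ρl (μ (α (β y)) (α (α z))) (φ (φ (φ v))))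
      - ρl (μ (α (β (β y))) (α (α (β z)))) (ρl (β (α (α x))) (φ (φ (φ v)))))
    + (ρl (β (β (α (α y)))) (ρl (μ (α (β z)) (α (α x))) (φ (φ (φ v))))
      - ρl (μ (α (β (β z))) (α (α (β x)))) (ρl (β (α (α y))) (φ (φ (φ v))))) = 0) ∧
  (∀ x y z v,
    ρl (β (β (α (α z)))) (ρl (β (α (α y))) (ρl (α (α x)) (ψinv (φ (φ (φ v))))))
    + ρl (β (β (α (α x)))) (ρl (β (α (α y))) (ρl (α (α z)) (ψinv (φ (φ (φ v))))))
    + ρl (μ (μ (β (β x)) (β (α z))) (β (α (α y)))) (φ (φ (φ (ψ v))))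
    = ρl (μ (β (β (α y))) (β (α (α z)))) (ρl (β (α (α x))) (φ (φ (φ v))))
    + ρl (μ (β (β (α y))) (β (α (α x)))) (ρl (β (α (α z))) (φ (φ (φ v))))
    + ρl (μ (β (β (α x))) (β (α (α z)))) (ρl (β (α (α y))) (φ (φ (φ v)))))

/-- Right special BiHom-Jordan module. -/
def IsRightSpecialBiHomJordanModule (K : Type*) {A V : Type*} [Field K]
    [AddCommGroup A] [Module K A] [AddCommGroup V] [Module K V]
    (μ : A → A → A) (α β : A → A) (φ ψ : V → V) (ρr : V → A → V) : Prop :=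
  IsBilin K ρr ∧
  (∀ v x, φ (ρr v x) = ρr (φ v) (α x)) ∧
  (∀ v x, ψ (ρr v x) = ρr (ψ v) (β x)) ∧
  (∀ x y v, ρr (φ v) (μ (β x) (α y))
      = ρr (ρr v (β x)) (β (α y)) + ρr (ρr v (β y)) (α (β x)))

/-- Left special BiHom-Jordan module. -/
def IsLeftSpecialBiHomJordanModule (K : Type*) {A V : Type*} [Field K]
    [AddCommGroup A] [Module K A] [AddCommGroup V] [Module K V]
    (μ : A → A → A) (α β : A → A) (φ ψ : V → V) (ρl : A → V → V) : Prop :=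
  IsBilin K ρl ∧
  (∀ x v, φ (ρl x v) = ρl (α x) (φ v)) ∧
  (∀ x v, ψ (ρl x v) = ρl (β x) (ψ v)) ∧
  (∀ x y v, ρl (μ (β x) (α y)) (ψ v)
      = ρl (β (α x)) (ρl (α y) v) + ρl (β (α y)) (ρl (α x) v))

universe uB

/-- Yau-type twisting of a BiHom-alternative algebra by two commuting
algebra homomorphisms, together with functoriality of the twist. -/
theorem twist_isBiHomAlternative
    (K : Type*) [Field K] [CharZero K]
    {A : Type*} [AddCommGroup A] [Module K A]
    (μ : A → A → A) (α β : A → A)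
    (hA : IsBiHomAlternative K μ α β)
    (α' β' : A → A) (hα' : IsLinearMap K α') (hβ' : IsLinearMap K β')
    (hα'μ : ∀ x y, α' (μ x y) = μ (α' x) (α' y))
    (hβ'μ : ∀ x y, β' (μ x y) = μ (β' x) (β' y))
    (hαα' : ∀ x, α (α' x) = α' (α x)) (hαβ' : ∀ x, α (β' x) = β' (α x))
    (hβα' : ∀ x, β (α' x) = α' (β x)) (hββ' : ∀ x, β (β' x) = β' (β x))
    (hα'β' : ∀ x, α' (β' x) = β' (α' x)) :
    IsBiHomAlternative K (fun x y => μ (α' x) (β' y)) (α ∘ α') (β ∘ β') ∧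
    (∀ (B : Type uB) (_ : AddCommGroup B) (_ : Module K B)
        (μ' : B → B → B) (γ δ γ' δ' : B → B),
      IsBiHomAlternative K μ' γ δ →
      IsLinearMap K γ' → IsLinearMap K δ' →
      (∀ x y, γ' (μ' x y) = μ' (γ' x) (γ' y)) →
      (∀ x y, δ' (μ' x y) = μ' (δ' x) (δ' y)) →
      (∀ x, γ (γ' x) = γ' (γ x)) → (∀ x, γ (δ' x) = δ' (γ x)) →
      (∀ x, δ (γ' x) = γ' (δ x)) → (∀ x, δ (δ' x) = δ' (δ x)) →
      (∀ x, γ' (δ' x) = δ' (γ' x)) →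
      ∀ f : A → B, IsLinearMap K f →
        (∀ x y, f (μ x y) = μ' (f x) (f y)) →
        (∀ x, f (α x) = γ (f x)) → (∀ x, f (β x) = δ (f x)) →
        (∀ x, f (α' x) = γ' (f x)) → (∀ x, f (β' x) = δ' (f x)) →
        ((∀ x y, f (μ (α' x) (β' y)) = μ' (γ' (f x)) (δ' (f y))) ∧
          (∀ x, f (α (α' x)) = γ (γ' (f x))) ∧
          (∀ x, f (β (β' x)) = δ (δ' (f x))))) := by
  obtain ⟨hbil, hαl, hβl, hcomm, hαμ, hβμ, h7, h8⟩ := hA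
  -- normalizing simp set for commuting the four maps
  have key : ∀ x y z, biHomAssoc (fun x y => μ (α' x) (β' y)) (α ∘ α') (β ∘ β') x y z
      = biHomAssoc μ α β (α' (α' x)) (α' (β' y)) (β' (β' z)) := by
    intro x y z
    simp only [biHomAssoc, Function.comp_apply]
    rw [hα'μ, hβ'μ]
    simp only [hαα', hαβ', hβα', hββ', hα'β', hcomm]
  constructor
  · refine ⟨⟨?_, ?_⟩, ?_, ?_, ?_, ?_, ?_, ?_, ?_⟩
    · intro m
      exact ⟨fun a b => by simp [hβ'.map_add, (hbil.1 _).map_add],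
        fun c a => by simp [hβ'.map_smul, (hbil.1 _).map_smul]⟩
    · intro n
      exact ⟨fun a b => by simp [hα'.map_add, (hbil.2 _).map_add],
        fun c a => by simp [hα'.map_smul, (hbil.2 _).map_smul]⟩
    · exact ⟨fun a b => by simp [hα'.map_add, hαl.map_add],
        fun c a => by simp [hα'.map_smul, hαl.map_smul]⟩
    · exact ⟨fun a b => by simp [hβ'.map_add, hβl.map_add],
        fun c a => by simp [hβ'.map_smul, hβl.map_smul]⟩
    · intro x
      simp only [Function.comp_apply, hαα', hαβ', hβα', hββ', hα'β', hcomm]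
    · intro x y
      simp only [Function.comp_apply]
      rw [hα'μ, hαμ]
      simp only [hαα', hαβ', hβα', hββ', hα'β', hcomm]
    · intro x y
      simp only [Function.comp_apply]
      rw [hβ'μ, hβμ]
      simp only [hαα', hαβ', hβα', hββ', hα'β', hcomm]
    · intro x y z
      rw [key, key]
      have e1 : ∀ t, α' (α' ((β ∘ β') t)) = β (α' (α' (β' t))) := by
        intro t
        simp only [Function.comp_apply, hαα', hαβ', hβα', hββ', hα'β', hcomm]
      have e2 : ∀ t, α' (β' ((α ∘ α') t)) = α (α' (α' (β' t))) := by
        intro t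
        simp only [Function.comp_apply, hαα', hαβ', hβα', hββ', hα'β', hcomm]
      rw [e1, e2, e1, e2]
      exact h7 _ _ _
    · intro x y z
      rw [key, key]
      have e1 : ∀ t, α' (β' ((β ∘ β') t)) = β (α' (β' (β' t))) := by
        intro t
        simp only [Function.comp_apply, hαα', hαβ', hβα', hββ', hα'β', hcomm]
      have e2 : ∀ t, β' (β' ((α ∘ α') t)) = α (α' (β' (β' t))) := by
        intro t
        simp only [Function.comp_apply, hαα', hαβ', hβα', hββ', hα'β', hcomm]
      rw [e1, e2, e1, e2]
      exact h8 _ _ _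
  · intro B _ _ μ' γ δ γ' δ' _ _ _ _ _ _ _ _ _ _ f _ hfμ hfα hfβ hfα' hfβ'
    refine ⟨fun x y => by rw [hfμ, hfα', hfβ'],
      fun x => by rw [hfα, hfα'], fun x => by rw [hfβ, hfβ']⟩
end

section
/- Let (A,μ,α,β) be a BiHom-alternative algebra and R: A→A a Rota–Baxter operator of weight 0 (a linear map satisfying μ(R(x),R(y)) = R(μ(R(x),y)+μ(x,R(y))) for all x,y∈A) that commutes with α and β. Define μ_R(x,y) = μ(R(x),y)+μ(x,R(y)). Then A_R = (A,μ_R,α,β) is a BiHom-alternative algebra. -/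
open TensorProduct

/-- a Rota–Baxter operator of weight 0 commuting with the structure
maps of a BiHom-alternative algebra induces a new BiHom-alternative algebra. -/
theorem rotaBaxter_isBiHomAlternative
    (K : Type*) [Field K] [CharZero K]
    {A : Type*} [AddCommGroup A] [Module K A]
    (μ : A → A → A) (α β : A → A)
    (hA : IsBiHomAlternative K μ α β)
    (R : A → A) (hRlin : IsLinearMap K R)
    (hRB : ∀ x y, μ (R x) (R y) = R (μ (R x) y + μ x (R y)))
    (hRα : ∀ x, R (α x) = α (R x)) (hRβ : ∀ x, R (β x) = β (R x)) :
    IsBiHomAlternative K (fun x y => μ (R x) y + μ x (R y)) α β := by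
  obtain ⟨⟨hμl, hμr⟩, hα, hβ, hαβ, hαμ, hβμ, hleft, hright⟩ := hA
  have six : ∀ a1 a2 a3 b1 b2 b3 : A, a1 + b1 = 0 → a2 + b3 = 0 → b2 + a3 = 0 →
      a1 + a2 + a3 + (b1 + b2 + b3) = 0 := by
    intro a1 a2 a3 b1 b2 b3 h1 h2 h3
    have h : a1 + a2 + a3 + (b1 + b2 + b3) = (a1 + b1) + ((a2 + b3) + (b2 + a3)) := by abel
    rw [h, h1, h2, h3]; simp
  have six' : ∀ a1 a2 a3 b1 b2 b3 : A, a1 + b2 = 0 → a2 + b1 = 0 → a3 + b3 = 0 →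
      a1 + a2 + a3 + (b1 + b2 + b3) = 0 := by
    intro a1 a2 a3 b1 b2 b3 h1 h2 h3
    have h : a1 + a2 + a3 + (b1 + b2 + b3) = (a1 + b2) + ((a2 + b1) + (a3 + b3)) := by abel
    rw [h, h1, h2, h3]; simp
  have key : ∀ x y z, biHomAssoc (fun x y => μ (R x) y + μ x (R y)) α β x y z =
      biHomAssoc μ α β (R x) (R y) z + biHomAssoc μ α β (R x) y (R z)
        + biHomAssoc μ α β x (R y) (R z) := by
    intro x y z
    simp only [biHomAssoc]
    rw [← hRB x y, ← hRB y z, hRβ, hRα,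
      (hμr (β (R z))).map_add, (hμl (α (R x))).map_add]
    abel
  refine ⟨⟨?_, ?_⟩, hα, hβ, hαβ, ?_, ?_, ?_, ?_⟩
  · intro m
    refine ⟨fun n1 n2 => ?_, fun c n => ?_⟩
    · simp only [(hμl (R m)).map_add, hRlin.map_add, (hμl m).map_add]; abel
    · simp only [(hμl (R m)).map_smul, hRlin.map_smul, (hμl m).map_smul, smul_add]
  · intro n
    refine ⟨fun m1 m2 => ?_, fun c m => ?_⟩
    · simp only [hRlin.map_add, (hμr n).map_add, (hμr (R n)).map_add]; abel
    · simp only [hRlin.map_smul, (hμr n).map_smul, (hμr (R n)).map_smul, smul_add]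
  · intro x y
    simp only [hα.map_add, hαμ, hRα]
  · intro x y
    simp only [hβ.map_add, hβμ, hRβ]
  · intro x y z
    rw [key, key, hRα, hRβ, hRα, hRβ]
    exact six _ _ _ _ _ _ (hleft (R x) (R y) z) (hleft (R x) y (R z)) (hleft (R y) x (R z))
  · intro x y z
    rw [key, key, hRα, hRβ, hRα, hRβ]
    exact six' _ _ _ _ _ _ (hright (R x) (R y) z) (hright (R x) y (R z)) (hright x (R y) (R z))
end

section
/- Let (A,μ,α,β) be a regular BiHom-associative algebra, i.e., a BiHom-associative algebra in which α and β are bijective and their inverses are also algebra homomorphisms. Define μ'(x,y) = μ(x,y) + μ(α^{-1}β(y), β^{-1}α(x)) for x,y∈A. Then A⁺ = (A,μ',α,β) is a BiHom-Jordan algebra. -/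
open TensorProduct

/-- the plus algebra of a regular BiHom-associative algebra,
with product μ'(x,y) = μ(x,y) + μ(α⁻¹β(y), β⁻¹α(x)), is a BiHom-Jordan algebra. -/
theorem plus_isBiHomJordan
    (K : Type*) [Field K] [CharZero K]
    {A : Type*} [AddCommGroup A] [Module K A]
    (μ : A → A → A) (α β αi βi : A → A)
    (hA : IsBiHomAssociative K μ α β)
    (hααi : ∀ x, α (αi x) = x) (hαiα : ∀ x, αi (α x) = x)
    (hββi : ∀ x, β (βi x) = x) (hβiβ : ∀ x, βi (β x) = x)
    (hαi : IsLinearMap K αi) (hβi : IsLinearMap K βi)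
    (hαiμ : ∀ x y, αi (μ x y) = μ (αi x) (αi y))
    (hβiμ : ∀ x y, βi (μ x y) = μ (βi x) (βi y)) :
    IsBiHomJordan K (fun x y => μ x y + μ (αi (β y)) (βi (α x))) α β := by
  obtain ⟨⟨hbl, hbr⟩, hα, hβ, hcomm, hαμ, hβμ, has0⟩ := hA
  have hassoc : ∀ x y z, μ (μ x y) (β z) = μ (α x) (μ y z) := fun x y z =>
    sub_eq_zero.mp (has0 x y z)
  have hμaddl : ∀ x y z, μ (x + y) z = μ x z + μ y z := fun x y z => (hbr z).map_add x y
  have hμaddr : ∀ x y z, μ x (y + z) = μ x y + μ x z := fun x y z => (hbl x).map_add y z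
  have hμsmull : ∀ (c : K) x y, μ (c • x) y = c • μ x y := fun c x y => (hbr y).map_smul c x
  have hμsmulr : ∀ (c : K) x y, μ x (c • y) = c • μ x y := fun c x y => (hbl x).map_smul c y
  have hααi' : ∀ x, α (αi x) = αi (α x) := fun x => by rw [hααi, hαiα]
  have hββi' : ∀ x, β (βi x) = βi (β x) := fun x => by rw [hββi, hβiβ]
  have hβαi : ∀ x, β (αi x) = αi (β x) := fun x => by
    rw [← hαiα (β (αi x)), hcomm, hααi]
  have hαβi : ∀ x, α (βi x) = βi (α x) := fun x => by
    rw [← hβiβ (α (βi x)), ← hcomm, hββi]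
  have hαiβi : ∀ x, αi (βi x) = βi (αi x) := fun x => by
    rw [← hβiβ (αi (βi x)), hβαi, hββi]
  have h1 : ∀ t, αi (β (α t)) = β t := fun t => by rw [← hcomm, hαiα]
  have h2 : ∀ t, βi (α (β t)) = α t := fun t => by rw [hcomm, hβiβ]
  set ν : A → A → A := fun a b => μ (αi a) (βi b) with hνdef
  have hν : ∀ a b, ν a b = μ (αi a) (βi b) := fun _ _ => rfl
  have key : ∀ a b c, μ (μ a b) c = μ (α a) (μ b (βi c)) := fun a b c => by
    conv_lhs => rw [← hββi c]
    rw [hassoc]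
  have hνassoc : ∀ a b c, ν (ν a b) c = ν a (ν b c) := by
    intro a b c
    rw [hν, hν, hν, hν, hαiμ, key, hααi, hβiμ, hαiβi]
  have hμν : ∀ x y, μ x y = ν (α x) (β y) := fun x y => by
    rw [hν, hαiα, hβiβ]
  have hαν : ∀ a b, α (ν a b) = ν (α a) (α b) := fun a b => by
    rw [hν, hν, hαμ, hααi', hαβi]
  have hβν : ∀ a b, β (ν a b) = ν (β a) (β b) := fun a b => by
    rw [hν, hν, hβμ, hβαi, hββi']
  have hνladd : ∀ a b c, ν (a + b) c = ν a c + ν b c := fun a b c => by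
    rw [hν, hν, hν, hαi.map_add, hμaddl]
  have hνradd : ∀ a b c, ν a (b + c) = ν a b + ν a c := fun a b c => by
    rw [hν, hν, hν, hβi.map_add, hμaddr]
  have hμ' : ∀ a b, μ a b + μ (αi (β b)) (βi (α a)) = ν (α a) (β b) + ν (β b) (α a) := by
    intro a b
    rw [hμν a b, hμν (αi (β b)) (βi (α a)), hααi, hββi]
  refine ⟨⟨?_, ?_⟩, hα, hβ, hcomm, ?_, ?_, ?_, ?_⟩
  · intro m
    constructor
    · intro y z
      simp only [hμaddr, hβ.map_add, hαi.map_add, hμaddl]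
      abel
    · intro c y
      simp only [hβ.map_smul, hαi.map_smul, hμsmull, hμsmulr, smul_add]
  · intro n
    constructor
    · intro y z
      simp only [hμaddl, hα.map_add, hβi.map_add, hμaddr]
      abel
    · intro c y
      simp only [hα.map_smul, hβi.map_smul, hμsmull, hμsmulr, smul_add]
  · intro x y
    simp only [hα.map_add, hαμ, hααi', hαβi, hcomm]
  · intro x y
    simp only [hβ.map_add, hβμ, hβαi, hββi', hcomm]
  · intro x y
    simp only [h1, h2]
    exact add_comm _ _
  · intro x y
    unfold biHomAssoc
    beta_reduce
    simp only [hμ']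
    simp only [hα.map_add, hβ.map_add, hαν, hβν, hνladd, hνradd, hcomm]
    simp only [hνassoc]
    abel
end

section
/- Let f: (A,μ_A,α_A,β_A) → (B,μ_B,α_B,β_B) be a surjective morphism of BiHom-alternative algebras (f∘μ_A = μ_B∘(f⊗f), f∘α_A = α_B∘f, f∘β_A = β_B∘f). Then (B,α_B,β_B) is a BiHom-alternative A-bimodule with structure maps ρ_l(a,b) = μ_B(f(a),b) and ρ_r(b,a) = μ_B(b,f(a)) for a∈A, b∈B. -/
open TensorProduct

/-- a surjective morphism of BiHom-alternative algebras makes the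
codomain a BiHom-alternative bimodule over the domain. -/
theorem surjective_morphism_gives_bimodule
    (K : Type*) [Field K] [CharZero K]
    {A B : Type*} [AddCommGroup A] [Module K A] [AddCommGroup B] [Module K B]
    (μA : A → A → A) (αA βA : A → A) (μB : B → B → B) (αB βB : B → B)
    (hA : IsBiHomAlternative K μA αA βA) (hB : IsBiHomAlternative K μB αB βB)
    (f : A → B) (hf : IsLinearMap K f) (hsurj : Function.Surjective f)
    (hfμ : ∀ x y, f (μA x y) = μB (f x) (f y))
    (hfα : ∀ x, f (αA x) = αB (f x)) (hfβ : ∀ x, f (βA x) = βB (f x)) :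
    IsBiHomAlternativeBimodule K μA αA βA αB βB
      (fun a b => μB (f a) b) (fun b a => μB b (f a)) := by
  obtain ⟨⟨hμl, hμr⟩, hαB, hβB, hcomm, hαμ, hβμ, halt1, halt2⟩ := hB
  refine ⟨⟨?_, ?_, hαB, hβB, fun v => hcomm v, ?_, ?_, ?_, ?_⟩, ?_, ?_, ?_, ?_⟩
  · -- IsBilin ρl
    refine ⟨fun x => hμl (f x), fun w => ⟨fun a a' => ?_, fun c a => ?_⟩⟩
    · show μB (f (a + a')) w = μB (f a) w + μB (f a') w
      rw [hf.map_add]; exact (hμr w).map_add _ _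
    · show μB (f (c • a)) w = c • μB (f a) w
      rw [hf.map_smul]; exact (hμr w).map_smul _ _
  · -- IsBilin ρr
    refine ⟨fun b => ⟨fun a a' => ?_, fun c a => ?_⟩, fun a => hμr (f a)⟩
    · show μB b (f (a + a')) = μB b (f a) + μB b (f a')
      rw [hf.map_add]; exact (hμl b).map_add _ _
    · show μB b (f (c • a)) = c • μB b (f a)
      rw [hf.map_smul]; exact (hμl b).map_smul _ _
  · intro x v
    show αB (μB (f x) v) = μB (f (αA x)) (αB v)
    rw [hαμ, hfα]
  · intro x v
    show βB (μB (f x) v) = μB (f (βA x)) (βB v)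
    rw [hβμ, hfβ]
  · intro v x
    show αB (μB v (f x)) = μB (αB v) (f (αA x))
    rw [hαμ, hfα]
  · intro v x
    show βB (μB v (f x)) = μB (βB v) (f (βA x))
    rw [hβμ, hfβ]
  · -- asVl (β x) (α x) v = 0
    intro x v
    have h2 : (2:K) • biHomAssoc μB αB βB (βB (f x)) (αB (f x)) v = 0 := by
      rw [two_smul]; exact halt1 (f x) (f x) v
    have h := (smul_eq_zero.mp h2).resolve_left (by norm_num)
    simp only [biHomAssoc] at h
    simp only [asVl, hfμ, hfα, hfβ]
    exact h
  · -- asVr v (β x) (α x) = 0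
    intro x v
    have h2 : (2:K) • biHomAssoc μB αB βB v (βB (f x)) (αB (f x)) = 0 := by
      rw [two_smul]; exact halt2 v (f x) (f x)
    have h := (smul_eq_zero.mp h2).resolve_left (by norm_num)
    simp only [biHomAssoc] at h
    simp only [asVr, hfμ, hfα, hfβ]
    exact h
  · intro x y v
    have h := halt1 (f x) v (f y)
    simp only [biHomAssoc] at h
    simp only [asVm, asVr, hfμ, hfα, hfβ]
    exact eq_neg_of_add_eq_zero_left h
  · intro x y v
    have h := halt2 (f y) (f x) v
    simp only [biHomAssoc] at h
    simp only [asVl, asVm, hfμ, hfα, hfβ]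
    exact eq_neg_of_add_eq_zero_left h
end

section
/- Let (A,μ,α,β) be a BiHom-alternative algebra and (V,φ,ψ) a BiHom-alternative A-bimodule with structure maps ρ_l and ρ_r. Then for all natural numbers n,m, the maps ρ_l^{(n,m)}(x,v) = ρ_l(α^n β^m(x), v) and ρ_r^{(n,m)}(v,x) = ρ_r(v, α^n β^m(x)) give the BiHom-module (V,φ,ψ) the structure of a BiHom-alternative A-bimodule. -/
open TensorProduct

private lemma iter_comm' {A : Type*} (f g : A → A) (h : ∀ x, f (g x) = g (f x)) :
    ∀ (k : ℕ) (x : A), f^[k] (g x) = g (f^[k] x) := by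
  intro k
  induction k with
  | zero => intro x; rfl
  | succ j ih => intro x; simp only [Function.iterate_succ_apply', ih, h]

private lemma iter_mul' {A : Type*} (μ : A → A → A) (f : A → A)
    (h : ∀ x y, f (μ x y) = μ (f x) (f y)) :
    ∀ (k : ℕ) (x y : A), f^[k] (μ x y) = μ (f^[k] x) (f^[k] y) := by
  intro k
  induction k with
  | zero => intro x y; rfl
  | succ j ih => intro x y; simp only [Function.iterate_succ_apply', ih, h]

private lemma iter_lin' (K : Type*) {A : Type*} [Field K] [AddCommGroup A] [Module K A]
    (f : A → A) (hf : IsLinearMap K f) : ∀ (k : ℕ), IsLinearMap K (f^[k]) := by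
  intro k
  induction k with
  | zero => exact ⟨fun _ _ => rfl, fun _ _ => rfl⟩
  | succ j ih =>
    refine ⟨fun a b => ?_, fun c a => ?_⟩
    · simp only [Function.iterate_succ_apply', ih.map_add, hf.map_add]
    · simp only [Function.iterate_succ_apply', ih.map_smul, hf.map_smul]

/-- twisting the structure maps of a BiHom-alternative bimodule by
αⁿβᵐ yields again a BiHom-alternative bimodule. -/
theorem bimodule_nm_twist
    (K : Type*) [Field K] [CharZero K]
    {A V : Type*} [AddCommGroup A] [Module K A] [AddCommGroup V] [Module K V]
    (μ : A → A → A) (α β : A → A)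
    (hA : IsBiHomAlternative K μ α β)
    (φ ψ : V → V) (ρl : A → V → V) (ρr : V → A → V)
    (hmod : IsBiHomAlternativeBimodule K μ α β φ ψ ρl ρr)
    (n m : ℕ) :
    IsBiHomAlternativeBimodule K μ α β φ ψ
      (fun x v => ρl (α^[n] (β^[m] x)) v)
      (fun v x => ρr v (α^[n] (β^[m] x))) := by
  obtain ⟨hμbil, hαlin, hβlin, hαβ, hαμ, hβμ, -, -⟩ := hA
  obtain ⟨⟨hlbil, hrbil, hφ, hψ, hφψ, hφl, hψl, hφr, hψr⟩, h1, h2, h3, h4⟩ := hmod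
  have hβmα : ∀ x, β^[m] (α x) = α (β^[m] x) := iter_comm' β α (fun x => (hαβ x).symm) m
  have hβmμ : ∀ x y, β^[m] (μ x y) = μ (β^[m] x) (β^[m] y) := iter_mul' μ β hβμ m
  have hβmlin : IsLinearMap K (β^[m]) := iter_lin' K β hβlin m
  have hαnβ : ∀ x, α^[n] (β x) = β (α^[n] x) := iter_comm' α β hαβ n
  have hαnμ : ∀ x y, α^[n] (μ x y) = μ (α^[n] x) (α^[n] y) := iter_mul' μ α hαμ n
  have hαnlin : IsLinearMap K (α^[n]) := iter_lin' K α hαlin n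
  have hγα : ∀ x, α^[n] (β^[m] (α x)) = α (α^[n] (β^[m] x)) := by
    intro x
    rw [hβmα, ← Function.iterate_succ_apply, Function.iterate_succ_apply']
  have hγβ : ∀ x, α^[n] (β^[m] (β x)) = β (α^[n] (β^[m] x)) := by
    intro x
    rw [← Function.iterate_succ_apply, Function.iterate_succ_apply', hαnβ]
  have hγμ : ∀ x y, α^[n] (β^[m] (μ x y)) = μ (α^[n] (β^[m] x)) (α^[n] (β^[m] y)) := by
    intro x y; rw [hβmμ, hαnμ]
  refine ⟨⟨?_, ?_, hφ, hψ, hφψ, ?_, ?_, ?_, ?_⟩, ?_, ?_, ?_, ?_⟩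
  · -- bilinearity of ρl'
    refine ⟨fun x => hlbil.1 _, fun v => ⟨fun a b => ?_, fun c a => ?_⟩⟩
    · simp only [hαnlin.map_add, hβmlin.map_add, (hlbil.2 v).map_add]
    · simp only [hαnlin.map_smul, hβmlin.map_smul, (hlbil.2 v).map_smul]
  · -- bilinearity of ρr'
    refine ⟨fun v => ⟨fun a b => ?_, fun c a => ?_⟩, fun x => hrbil.2 _⟩
    · simp only [hαnlin.map_add, hβmlin.map_add, (hrbil.1 v).map_add]
    · simp only [hαnlin.map_smul, hβmlin.map_smul, (hrbil.1 v).map_smul]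
  · intro x v; simp only [hφl, hγα]
  · intro x v; simp only [hψl, hγβ]
  · intro v x; simp only [hφr, hγα]
  · intro v x; simp only [hψr, hγβ]
  · intro x v
    simpa only [asVl, hγμ, hγα, hγβ] using h1 (α^[n] (β^[m] x)) v
  · intro x v
    simpa only [asVr, hγμ, hγα, hγβ] using h2 (α^[n] (β^[m] x)) v
  · intro x y v
    simpa only [asVm, asVr, hγμ, hγα, hγβ] using h3 (α^[n] (β^[m] x)) (α^[n] (β^[m] y)) v
  · intro x y v
    simpa only [asVl, asVm, hγμ, hγα, hγβ] using h4 (α^[n] (β^[m] x)) (α^[n] (β^[m] y)) v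
end

section
/- Let (A,μ,α,β) be a BiHom-alternative algebra and (V,φ,ψ) a BiHom-alternative A-bimodule with structure maps ρ_l,ρ_r. Let α',β' be algebra endomorphisms of A such that any two of α,α',β,β' commute, and let φ',ψ' be linear self-maps of V such that any two of φ,φ',ψ,ψ' commute, satisfying φ'(ρ_l(x,v)) = ρ_l(α'(x),φ'(v)), ψ'(ρ_l(x,v)) = ρ_l(β'(x),ψ'(v)), φ'(ρ_r(v,x)) = ρ_r(φ'(v),α'(x)) and ψ'(ρ_r(v,x)) = ρ_r(ψ'(v),β'(x)). Then the maps ρ̃_l(x,v) = ρ_l(α'(x),ψ'(v)) and ρ̃_r(v,x) = ρ_r(φ'(v),β'(x)) give the BiHom-module (V, φ∘φ', ψ∘ψ') the structure of a BiHom-alternative A_{α',β'}-bimodule, where A_{α',β'} = (A, μ_{α',β'}, α∘α', β∘β') is the BiHom-alternative algebra with product μ_{α',β'}(x,y) = μ(α'(x),β'(y)). -/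
open TensorProduct

lemma isBilin_comp {K : Type*} {M N P M' N' : Type*} [Field K]
    [AddCommGroup M] [Module K M] [AddCommGroup N] [Module K N]
    [AddCommGroup P] [Module K P] [AddCommGroup M'] [Module K M']
    [AddCommGroup N'] [Module K N']
    {f : M → N → P} (hf : IsBilin K f)
    {g : M' → M} (hg : IsLinearMap K g) {h : N' → N} (hh : IsLinearMap K h) :
    IsBilin K (fun m n => f (g m) (h n)) := by
  constructor
  · intro m
    exact ⟨fun a b => by simp only [hh.map_add, (hf.1 _).map_add],
           fun c a => by simp only [hh.map_smul, (hf.1 _).map_smul]⟩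
  · intro n
    exact ⟨fun a b => by simp only [hg.map_add, (hf.2 _).map_add],
           fun c a => by simp only [hg.map_smul, (hf.2 _).map_smul]⟩

/-- twisting a BiHom-alternative bimodule by commuting algebra
endomorphisms α', β' of A and compatible maps φ', ψ' of V yields a
BiHom-alternative bimodule over the twisted algebra A_{α',β'}. -/
theorem bimodule_twist
    (K : Type*) [Field K] [CharZero K]
    {A V : Type*} [AddCommGroup A] [Module K A] [AddCommGroup V] [Module K V]
    (μ : A → A → A) (α β : A → A)
    (hA : IsBiHomAlternative K μ α β)
    (φ ψ : V → V) (ρl : A → V → V) (ρr : V → A → V)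
    (hmod : IsBiHomAlternativeBimodule K μ α β φ ψ ρl ρr)
    (α' β' : A → A) (hα' : IsLinearMap K α') (hβ' : IsLinearMap K β')
    (hα'μ : ∀ x y, α' (μ x y) = μ (α' x) (α' y))
    (hβ'μ : ∀ x y, β' (μ x y) = μ (β' x) (β' y))
    (hαα' : ∀ x, α (α' x) = α' (α x)) (hαβ' : ∀ x, α (β' x) = β' (α x))
    (hβα' : ∀ x, β (α' x) = α' (β x)) (hββ' : ∀ x, β (β' x) = β' (β x))
    (hα'β' : ∀ x, α' (β' x) = β' (α' x))
    (φ' ψ' : V → V) (hφ' : IsLinearMap K φ') (hψ' : IsLinearMap K ψ')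
    (hφφ' : ∀ v, φ (φ' v) = φ' (φ v)) (hφψ' : ∀ v, φ (ψ' v) = ψ' (φ v))
    (hψφ' : ∀ v, ψ (φ' v) = φ' (ψ v)) (hψψ' : ∀ v, ψ (ψ' v) = ψ' (ψ v))
    (hφ'ψ' : ∀ v, φ' (ψ' v) = ψ' (φ' v))
    (hφ'ρl : ∀ x v, φ' (ρl x v) = ρl (α' x) (φ' v))
    (hψ'ρl : ∀ x v, ψ' (ρl x v) = ρl (β' x) (ψ' v))
    (hφ'ρr : ∀ v x, φ' (ρr v x) = ρr (φ' v) (α' x))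
    (hψ'ρr : ∀ v x, ψ' (ρr v x) = ρr (ψ' v) (β' x)) :
    IsBiHomAlternativeBimodule K
      (fun x y => μ (α' x) (β' y)) (α ∘ α') (β ∘ β') (φ ∘ φ') (ψ ∘ ψ')
      (fun x v => ρl (α' x) (ψ' v))
      (fun v x => ρr (φ' v) (β' x)) := by
  obtain ⟨hbilμ, hαlin, hβlin, hαβ, hαμ, hβμ, halt1, halt2⟩ := hA
  obtain ⟨⟨hbl, hbr, hφl, hψl, hφψ, hφρl, hψρl, hφρr, hψρr⟩, h1, h2, h3, h4⟩ := hmod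
  refine ⟨⟨isBilin_comp hbl hα' hψ', isBilin_comp hbr hφ' hβ', ?_, ?_, ?_, ?_, ?_, ?_, ?_⟩,
    ?_, ?_, ?_, ?_⟩
  · exact ⟨fun a b => by simp [hφ'.map_add, hφl.map_add],
      fun c a => by simp [hφ'.map_smul, hφl.map_smul]⟩
  · exact ⟨fun a b => by simp [hψ'.map_add, hψl.map_add],
      fun c a => by simp [hψ'.map_smul, hψl.map_smul]⟩
  · intro v
    simp only [Function.comp_apply, hαα', hαβ', hβα', hββ', hα'β', hαβ, hφψ, hφφ', hφψ', hψφ', hψψ', hφ'ψ', hφρl, hψρl, hφρr, hψρr, hφ'ρl, hψ'ρl, hφ'ρr, hψ'ρr]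
  · intro x v
    simp only [Function.comp_apply, hαα', hαβ', hβα', hββ', hα'β', hαβ, hφψ, hφφ', hφψ', hψφ', hψψ', hφ'ψ', hφρl, hψρl, hφρr, hψρr, hφ'ρl, hψ'ρl, hφ'ρr, hψ'ρr]
  · intro x v
    simp only [Function.comp_apply, hαα', hαβ', hβα', hββ', hα'β', hαβ, hφψ, hφφ', hφψ', hψφ', hψψ', hφ'ψ', hφρl, hψρl, hφρr, hψρr, hφ'ρl, hψ'ρl, hφ'ρr, hψ'ρr]
  · intro v x
    simp only [Function.comp_apply, hαα', hαβ', hβα', hββ', hα'β', hαβ, hφψ, hφφ', hφψ', hψφ', hψψ', hφ'ψ', hφρl, hψρl, hφρr, hψρr, hφ'ρl, hψ'ρl, hφ'ρr, hψ'ρr]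
  · intro v x
    simp only [Function.comp_apply, hαα', hαβ', hβα', hββ', hα'β', hαβ, hφψ, hφφ', hφψ', hψφ', hψψ', hφ'ψ', hφρl, hψρl, hφρr, hψρr, hφ'ρl, hψ'ρl, hφ'ρr, hψ'ρr]
  · intro x v
    have h := h1 (α' (α' (β' x))) (ψ' (ψ' v))
    simp only [asVl, Function.comp_apply, hαμ, hβμ, hα'μ, hβ'μ, hφρl, hψρl, hφ'ρl, hψ'ρl,
      hαα', hαβ', hβα', hββ', hα'β', hαβ, hφψ, hφφ', hφψ', hψφ', hψψ', hφ'ψ'] at h ⊢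
    exact h
  · intro x v
    have h := h2 (α' (β' (β' x))) (φ' (φ' v))
    simp only [asVr, Function.comp_apply, hαμ, hβμ, hα'μ, hβ'μ, hφρr, hψρr, hφ'ρr, hψ'ρr,
      hαα', hαβ', hβα', hββ', hα'β', hαβ, hφψ, hφφ', hφψ', hψφ', hψψ', hφ'ψ'] at h ⊢
    exact h
  · intro x y v
    have h := h3 (α' (α' (β' x))) (β' (β' y)) (φ' (ψ' (φ' v)))
    simp only [asVm, asVr, Function.comp_apply, hαμ, hβμ, hα'μ, hβ'μ, hφρl, hψρl, hφρr, hψρr,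
      hφ'ρl, hψ'ρl, hφ'ρr, hψ'ρr,
      hαα', hαβ', hβα', hββ', hα'β', hαβ, hφψ, hφφ', hφψ', hψφ', hψψ', hφ'ψ'] at h ⊢
    exact h
  · intro x y v
    have h := h4 (α' (β' (β' x))) (α' (α' y)) (ψ' (ψ' (φ' v)))
    simp only [asVl, asVm, Function.comp_apply, hαμ, hβμ, hα'μ, hβ'μ, hφρl, hψρl, hφρr, hψρr,
      hφ'ρl, hψ'ρl, hφ'ρr, hψ'ρr,
      hαα', hαβ', hβα', hββ', hα'β', hαβ, hφψ, hφφ', hφψ', hψφ', hψψ', hφ'ψ'] at h ⊢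
    exact h
end

section
/- Let (A,μ,α,β) be a BiHom-alternative algebra, (V,φ,ψ) a BiHom-alternative A-bimodule with structure maps ρ_l,ρ_r, and R: A→A a Rota–Baxter operator of weight 0 (a linear map with μ(R(x),R(y)) = R(μ(R(x),y)+μ(x,R(y))) for all x,y∈A) that commutes with α and β. Then the maps ρ̃_l(x,v) = ρ_l(R(x),v) and ρ̃_r(v,x) = ρ_r(v,R(x)) give the BiHom-module (V,φ,ψ) the structure of a BiHom-alternative A_R-bimodule, where A_R = (A,μ_R,α,β) is the BiHom-alternative algebra with product μ_R(x,y) = μ(R(x),y)+μ(x,R(y)). -/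
open TensorProduct

/-- a Rota–Baxter operator of weight 0 on a BiHom-alternative
algebra twists a BiHom-alternative bimodule into a bimodule over A_R. -/
theorem rotaBaxter_bimodule
    (K : Type*) [Field K] [CharZero K]
    {A V : Type*} [AddCommGroup A] [Module K A] [AddCommGroup V] [Module K V]
    (μ : A → A → A) (α β : A → A)
    (hA : IsBiHomAlternative K μ α β)
    (φ ψ : V → V) (ρl : A → V → V) (ρr : V → A → V)
    (hmod : IsBiHomAlternativeBimodule K μ α β φ ψ ρl ρr)
    (R : A → A) (hRlin : IsLinearMap K R)
    (hRB : ∀ x y, μ (R x) (R y) = R (μ (R x) y + μ x (R y)))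
    (hRα : ∀ x, R (α x) = α (R x)) (hRβ : ∀ x, R (β x) = β (R x)) :
    IsBiHomAlternativeBimodule K
      (fun x y => μ (R x) y + μ x (R y)) α β φ ψ
      (fun x v => ρl (R x) v)
      (fun v x => ρr v (R x)) := by

  obtain ⟨⟨hρl_bil, hρr_bil, hφ, hψ, hφψ, hφρl, hψρl, hφρr, hψρr⟩, h1, h2, h3, h4⟩ := hmod
  have hRμ : ∀ x y, R (μ (R x) y + μ x (R y)) = μ (R x) (R y) := fun x y => (hRB x y).symm
  -- twisted associators reduce to original associators at R-images
  have hVl : ∀ x y v, asVl (fun x y => μ (R x) y + μ x (R y)) α ψ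
      (fun x v => ρl (R x) v) x y v = asVl μ α ψ ρl (R x) (R y) v := by
    intro x y v
    simp only [asVl, hRμ, hRα]
  have hVr : ∀ v x y, asVr (fun x y => μ (R x) y + μ x (R y)) β φ
      (fun v x => ρr v (R x)) v x y = asVr μ β φ ρr v (R x) (R y) := by
    intro v x y
    simp only [asVr, hRμ, hRβ]
  have hVm : ∀ x v y, asVm α β (fun x v => ρl (R x) v)
      (fun v x => ρr v (R x)) x v y = asVm α β ρl ρr (R x) v (R y) := by
    intro x v y
    simp only [asVm, hRα, hRβ]
  refine ⟨⟨?_, ?_, hφ, hψ, hφψ, ?_, ?_, ?_, ?_⟩, ?_, ?_, ?_, ?_⟩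
  · exact ⟨fun x => hρl_bil.1 (R x), fun v =>
      ⟨fun a b => by simp [hRlin.1, (hρl_bil.2 v).1],
       fun c a => by simp [hRlin.2, (hρl_bil.2 v).2]⟩⟩
  · exact ⟨fun v =>
      ⟨fun a b => by simp [hRlin.1, (hρr_bil.1 v).1],
       fun c a => by simp [hRlin.2, (hρr_bil.1 v).2]⟩,
      fun x => hρr_bil.2 (R x)⟩
  · intro x v; simp only [hφρl, hRα]
  · intro x v; simp only [hψρl, hRβ]
  · intro v x; simp only [hφρr, hRα]
  · intro v x; simp only [hψρr, hRβ]
  · intro x v; rw [hVl, hRβ, hRα]; exact h1 (R x) v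
  · intro x v; rw [hVr, hRβ, hRα]; exact h2 (R x) v
  · intro x y v; rw [hVm, hVr, hRβ, hRα]; exact h3 (R x) (R y) v
  · intro x y v; rw [hVl, hVm, hRβ, hRα]; exact h4 (R x) (R y) v
end

section
/- Let (A,μ,α,β) be a BiHom-Jordan algebra, (V,φ,ψ) a BiHom-module with ψ invertible, and ρ_l: A×V→V (written x·v) a bilinear map satisfying φ(x·v) = α(x)·φ(v), ψ(x·v) = β(x)·ψ(v), and μ(β(x),α(y))·ψ(v) = βα(x)·(α(y)·v) + βα(y)·(α(x)·v) for all x,y∈A and v∈V. Then (V,φ,ψ,ρ_l) is a left BiHom-Jordan A-module. -/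
open TensorProduct

/-- a left special BiHom-Jordan module structure (with ψ invertible)
is a left BiHom-Jordan module. -/
theorem leftSpecial_is_leftBiHomJordanModule
    (K : Type*) [Field K] [CharZero K]
    {A V : Type*} [AddCommGroup A] [Module K A] [AddCommGroup V] [Module K V]
    (μ : A → A → A) (α β : A → A)
    (hJ : IsBiHomJordan K μ α β)
    (φ ψ ψinv : V → V) (hφ : IsLinearMap K φ) (hψ : IsLinearMap K ψ)
    (hφψ : ∀ v, φ (ψ v) = ψ (φ v))
    (hψψinv : ∀ v, ψ (ψinv v) = v) (hψinvψ : ∀ v, ψinv (ψ v) = v)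
    (ρl : A → V → V) (hρl : IsBilin K ρl)
    (hφρl : ∀ x v, φ (ρl x v) = ρl (α x) (φ v))
    (hψρl : ∀ x v, ψ (ρl x v) = ρl (β x) (ψ v))
    (hspec : ∀ x y v, ρl (μ (β x) (α y)) (ψ v)
        = ρl (β (α x)) (ρl (α y) v) + ρl (β (α y)) (ρl (α x) v)) :
    IsLeftBiHomJordanModule K μ α β φ ψ ψinv ρl := by
  obtain ⟨hbilμ, hlα, hlβ, hαβ, hαμ, hβμ, hcomm, hjid⟩ := hJ
  refine ⟨hρl, hφρl, hψρl, hψψinv, hψinvψ, ?_, ?_⟩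
  · intro x y z v
    have keyA : ∀ (a b c : A) (u : V),
        ρl (β (β (α (α c)))) (ρl (μ (α (β a)) (α (α b))) (ψ u))
          = ρl (β (β (α (α c)))) (ρl (β (α (α a))) (ρl (α (α b)) u))
            + ρl (β (β (α (α c)))) (ρl (β (α (α b))) (ρl (α (α a)) u)) := by
      intro a b c u
      rw [hαβ a, hspec, (hρl.1 _).map_add]
    have keyB : ∀ (a b c : A) (u : V),
        ρl (μ (α (β (β a))) (α (α (β b)))) (ρl (β (α (α c))) (ψ u))
          = ρl (β (β (α (α a)))) (ρl (β (α (α b))) (ρl (α (α c)) u))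
            + ρl (β (β (α (α b)))) (ρl (β (α (α a))) (ρl (α (α c)) u)) := by
      intro a b c u
      rw [← hψρl, hαβ (β a), hspec]
      simp only [hαβ]
    rw [show φ (φ (φ v)) = ψ (ψinv (φ (φ (φ v)))) from (hψψinv _).symm,
        keyA x y z, keyA y z x, keyA z x y, keyB x y z, keyB y z x, keyB z x y]
    abel
  · intro x y z v
    have keyD : ∀ (a b c : A) (u : V),
        ρl (μ (β (β (α a))) (β (α (α b)))) (ρl (β (α (α c))) (ψ u))
          = ρl (β (β (α (α a)))) (ρl (β (α (α b))) (ρl (α (α c)) u))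
            + ρl (β (β (α (α b)))) (ρl (β (α (α a))) (ρl (α (α c)) u)) := by
      intro a b c u
      rw [← hψρl, show β (α (α b)) = α (β (α b)) from (hαβ _).symm, hspec]
      simp only [hαβ]
    have keyC : ∀ (a b c : A) (u : V),
        ρl (μ (μ (β (β a)) (β (α c))) (β (α (α b)))) (ψ (ψ u))
          = ρl (β (β (α (α a)))) (ρl (β (α (α c))) (ρl (α (α b)) u))
            + ρl (β (β (α (α c)))) (ρl (β (α (α a))) (ρl (α (α b)) u))
            + ρl (β (β (α (α b)))) (ρl (β (α (α a))) (ρl (α (α c)) u))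
            + ρl (β (β (α (α b)))) (ρl (β (α (α c))) (ρl (α (α a)) u)) := by
      intro a b c u
      rw [show μ (β (β a)) (β (α c)) = β (μ (β a) (α c)) from (hβμ _ _).symm,
          show β (α (α b)) = α (β (α b)) from (hαβ _).symm,
          hspec, hαμ, hβμ,
          show β (α (α c)) = α (β (α c)) from (hαβ _).symm,
          show α (β (α b)) = β (α (α b)) from hαβ _,
          ← hψρl, hspec,
          show α (β a) = β (α a) from hαβ _, hspec, (hρl.1 _).map_add]
      simp only [hαβ]
      abel
    simp only [hφψ]
    rw [show φ (φ (φ v)) = ψ (ψinv (φ (φ (φ v)))) from (hψψinv _).symm]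
    simp only [hψinvψ]
    rw [keyD y z x, keyD y x z, keyD x z y, keyC x y z]
    abel
end

section
/- Let (A,μ,α,β) be a regular BiHom-alternative algebra (α and β bijective with inverses that are algebra homomorphisms), and let μ'(x,y) = μ(x,y) + μ(α^{-1}β(y),β^{-1}α(x)) be the plus product, so that μ'(β(x),α(y)) = μ(β(x),α(y)) + μ(β(y),α(x)). (1) If (V,φ,ψ) is a right BiHom-alternative A-module, i.e., a BiHom-module with a bilinear map ρ_r: V×A→V (written v·x) satisfying φ(v·x)=φ(v)·α(x), ψ(v·x)=ψ(v)·β(x), and as_V(v,β(x),α(y)) = −as_V(v,β(y),α(x)) for all x,y∈A, v∈V, then ρ_r satisfies φ(v)·μ'(β(x),α(y)) = (v·β(x))·βα(y) + (v·β(y))·αβ(x), i.e., (V,φ,ψ,ρ_r) is a right special BiHom-Jordan module over A⁺ = (A,μ',α,β). (2) If (V,φ,ψ) is a left BiHom-alternative A-module with ψ invertible, i.e., it has a bilinear map ρ_l: A×V→V (written x·v) satisfying φ(x·v)=α(x)·φ(v), ψ(x·v)=β(x)·ψ(v), and as_V(β(x),α(y),v) = −as_V(β(y),α(x),v), then ρ_l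 satisfies μ'(β(x),α(y))·ψ(v) = βα(x)·(α(y)·v) + βα(y)·(α(x)·v), i.e., (V,φ,ψ,ρ_l) is a left special BiHom-Jordan module over A⁺. -/
open TensorProduct

/-- right (resp. left) BiHom-alternative modules over a regular
BiHom-alternative algebra A are right (resp. left) special BiHom-Jordan modules
over the plus algebra A⁺, whose product is
μ'(x,y) = μ(x,y) + μ(α⁻¹β(y), β⁻¹α(x)). -/
theorem alternativeModules_are_specialJordanModules
    (K : Type*) [Field K] [CharZero K]
    {A V : Type*} [AddCommGroup A] [Module K A] [AddCommGroup V] [Module K V]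
    (μ : A → A → A) (α β αi βi : A → A)
    (hA : IsBiHomAlternative K μ α β)
    (hααi : ∀ x, α (αi x) = x) (hαiα : ∀ x, αi (α x) = x)
    (hββi : ∀ x, β (βi x) = x) (hβiβ : ∀ x, βi (β x) = x)
    (hαi : IsLinearMap K αi) (hβi : IsLinearMap K βi)
    (hαiμ : ∀ x y, αi (μ x y) = μ (αi x) (αi y))
    (hβiμ : ∀ x y, βi (μ x y) = μ (βi x) (βi y))
    (φ ψ : V → V) (hφ : IsLinearMap K φ) (hψ : IsLinearMap K ψ)
    (hφψ : ∀ v, φ (ψ v) = ψ (φ v)) :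
    (∀ ρr : V → A → V, IsBilin K ρr →
      (∀ v x, φ (ρr v x) = ρr (φ v) (α x)) →
      (∀ v x, ψ (ρr v x) = ρr (ψ v) (β x)) →
      (∀ x y v, asVr μ β φ ρr v (β x) (α y) = - asVr μ β φ ρr v (β y) (α x)) →
      IsRightSpecialBiHomJordanModule K
        (fun x y => μ x y + μ (αi (β y)) (βi (α x))) α β φ ψ ρr) ∧
    (∀ (ρl : A → V → V) (ψinv : V → V), IsBilin K ρl →
      (∀ x v, φ (ρl x v) = ρl (α x) (φ v)) →
      (∀ x v, ψ (ρl x v) = ρl (β x) (ψ v)) →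
      (∀ v, ψ (ψinv v) = v) → (∀ v, ψinv (ψ v) = v) →
      (∀ x y v, asVl μ α ψ ρl (β x) (α y) v = - asVl μ α ψ ρl (β y) (α x) v) →
      IsLeftSpecialBiHomJordanModule K
        (fun x y => μ x y + μ (αi (β y)) (βi (α x))) α β φ ψ ρl) := by
  obtain ⟨hbil, hlα, hlβ, hαβ, hαμ, hβμ, halt1, halt2⟩ := hA
  constructor
  · intro ρr hρbil hρφ hρψ halt
    refine ⟨hρbil, hρφ, hρψ, fun x y v => ?_⟩
    have h1 : αi (β (α y)) = β y := by rw [← hαβ, hαiα]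
    have h2 : βi (α (β x)) = α x := by rw [hαβ, hβiβ]
    have h3 := halt x y v
    simp only [asVr] at h3
    have h4 : ρr (φ v) (μ (β x) (α y)) + ρr (φ v) (μ (β y) (α x))
        = ρr (ρr v (β x)) (β (α y)) + ρr (ρr v (β y)) (β (α x)) := by
      linear_combination (norm := abel) -h3
    simp only [h1, h2]
    rw [(hρbil.1 (φ v)).map_add, h4, hαβ]
  · intro ρl ψinv hρbil hρφ hρψ hψ1 hψ2 halt
    refine ⟨hρbil, hρφ, hρψ, fun x y v => ?_⟩
    have h1 : αi (β (α y)) = β y := by rw [← hαβ, hαiα]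
    have h2 : βi (α (β x)) = α x := by rw [hαβ, hβiβ]
    have h3 := halt x y v
    simp only [asVl] at h3
    simp only [h1, h2]
    rw [(hρbil.2 (ψ v)).map_add]
    have h4 : ρl (μ (β x) (α y)) (ψ v) + ρl (μ (β y) (α x)) (ψ v)
        = ρl (α (β x)) (ρl (α y) v) + ρl (α (β y)) (ρl (α x) v) := by
      linear_combination (norm := abel) h3
    rw [h4, hαβ, hαβ]
end

section
/- Let (A,μ,α,β) be a regular BiHom-Jordan algebra (α and β bijective with inverses that are algebra homomorphisms) and (V,φ,ψ) a BiHom-module with φ and ψ invertible. Let ρ₁: A×V→V be a left special BiHom-Jordan A-module structure, i.e., φ(ρ₁(x,v))=ρ₁(α(x),φ(v)), ψ(ρ₁(x,v))=ρ₁(β(x),ψ(v)), and ρ₁(μ(β(x),α(y)),ψ(v)) = ρ₁(βα(x),ρ₁(α(y),v)) + ρ₁(βα(y),ρ₁(α(x),v)); let ρ₂: V×A→V be a right special BiHom-Jordan A-module structure, i.e., φ(ρ₂(v,x))=ρ₂(φ(v),α(x)), ψ(ρ₂(v,x))=ρ₂(ψ(v),β(x)), and ρ₂(φ(v),μ(β(x),α(y)))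 = ρ₂(ρ₂(v,β(x)),βα(y)) + ρ₂(ρ₂(v,β(y)),αβ(x)); and assume the operator BiHom-commutativity ρ₂(ρ₁(x,v),β(y)) = ρ₁(α(x),ρ₂(v,y)) for all x,y∈A, v∈V. Define ρ_l(x,v) = ρ₁(x,v) + ρ₂(ψφ^{-1}(v), αβ^{-1}(x)) and ρ_r(v,x) = ρ₁(βα^{-1}(x), φψ^{-1}(v)) + ρ₂(v,x). Then (V,φ,ψ,ρ_l,ρ_r) is a BiHom-Jordan A-bimodule. -/
open TensorProduct

/-- from a left and a right special BiHom-Jordan module structure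
satisfying operator BiHom-commutativity, over a regular BiHom-Jordan algebra and
with invertible φ, ψ, one builds a BiHom-Jordan bimodule via
ρ_l(x,v) = ρ₁(x,v) + ρ₂(ψφ⁻¹(v), αβ⁻¹(x)) and
ρ_r(v,x) = ρ₁(βα⁻¹(x), φψ⁻¹(v)) + ρ₂(v,x). -/
theorem special_modules_give_biHomJordanBimodule
    (K : Type*) [Field K] [CharZero K]
    {A V : Type*} [AddCommGroup A] [Module K A] [AddCommGroup V] [Module K V]
    (μ : A → A → A) (α β αi βi : A → A)
    (hJ : IsBiHomJordan K μ α β)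
    (hααi : ∀ x, α (αi x) = x) (hαiα : ∀ x, αi (α x) = x)
    (hββi : ∀ x, β (βi x) = x) (hβiβ : ∀ x, βi (β x) = x)
    (hαi : IsLinearMap K αi) (hβi : IsLinearMap K βi)
    (hαiμ : ∀ x y, αi (μ x y) = μ (αi x) (αi y))
    (hβiμ : ∀ x y, βi (μ x y) = μ (βi x) (βi y))
    (φ ψ φi ψi : V → V) (hφ : IsLinearMap K φ) (hψ : IsLinearMap K ψ)
    (hφψ : ∀ v, φ (ψ v) = ψ (φ v))
    (hφφi : ∀ v, φ (φi v) = v) (hφiφ : ∀ v, φi (φ v) = v)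
    (hψψi : ∀ v, ψ (ψi v) = v) (hψiψ : ∀ v, ψi (ψ v) = v)
    (ρ₁ : A → V → V) (ρ₂ : V → A → V)
    (hρ₁ : IsBilin K ρ₁) (hρ₂ : IsBilin K ρ₂)
    (hφρ₁ : ∀ x v, φ (ρ₁ x v) = ρ₁ (α x) (φ v))
    (hψρ₁ : ∀ x v, ψ (ρ₁ x v) = ρ₁ (β x) (ψ v))
    (hρ₁spec : ∀ x y v, ρ₁ (μ (β x) (α y)) (ψ v)
        = ρ₁ (β (α x)) (ρ₁ (α y) v) + ρ₁ (β (α y)) (ρ₁ (α x) v))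
    (hφρ₂ : ∀ v x, φ (ρ₂ v x) = ρ₂ (φ v) (α x))
    (hψρ₂ : ∀ v x, ψ (ρ₂ v x) = ρ₂ (ψ v) (β x))
    (hρ₂spec : ∀ x y v, ρ₂ (φ v) (μ (β x) (α y))
        = ρ₂ (ρ₂ v (β x)) (β (α y)) + ρ₂ (ρ₂ v (β y)) (α (β x)))
    (hop : ∀ x y v, ρ₂ (ρ₁ x v) (β y) = ρ₁ (α x) (ρ₂ v y)) :
    IsBiHomJordanBimodule K μ α β φ ψ
      (fun x v => ρ₁ x v + ρ₂ (ψ (φi v)) (α (βi x)))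
      (fun v x => ρ₁ (β (αi x)) (φ (ψi v)) + ρ₂ v x) := by
  obtain ⟨hμbil, hαl, hβl, hαβ, hαμ, hβμ, hcomm, hJid⟩ := hJ
  -- injectivity
  have injφ : ∀ u w, φ u = φ w → u = w := fun u w h => by rw [← hφiφ u, h, hφiφ]
  have injψ : ∀ u w, ψ u = ψ w → u = w := fun u w h => by rw [← hψiψ u, h, hψiψ]
  -- commutation among α, β and their inverses (β-letters outermost)
  have hαβi : ∀ x, α (βi x) = βi (α x) := fun x => by
    have h := hαβ (βi x); rw [hββi] at h; rw [h, hβiβ]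
  have hαiβ : ∀ x, αi (β x) = β (αi x) := fun x => by
    have h := hαβ (αi x); rw [hααi] at h; rw [← h, hαiα]
  have hαiβi : ∀ x, αi (βi x) = βi (αi x) := fun x => by
    have h := hαβi (αi x); rw [hααi] at h; rw [← h, hαiα]
  -- commutation among φ, ψ and their inverses (ψ-letters outermost)
  have hφψi : ∀ v, φ (ψi v) = ψi (φ v) := fun v => by
    have h := hφψ (ψi v); rw [hψψi] at h; rw [h, hψiψ]
  have hφiψ : ∀ v, φi (ψ v) = ψ (φi v) := fun v => by
    have h := hφψ (φi v); rw [hφφi] at h; rw [← h, hφiφ]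
  have hφiψi : ∀ v, φi (ψi v) = ψi (φi v) := fun v => by
    have h := hφiψ (ψi v); rw [hψψi] at h; rw [h, hψiψ]
  -- inverse compatibilities with ρ₁, ρ₂
  have hφiρ₁ : ∀ x v, φi (ρ₁ x v) = ρ₁ (αi x) (φi v) := fun x v => by
    have h := hφρ₁ (αi x) (φi v); rw [hααi, hφφi] at h; rw [← h, hφiφ]
  have hψiρ₁ : ∀ x v, ψi (ρ₁ x v) = ρ₁ (βi x) (ψi v) := fun x v => by
    have h := hψρ₁ (βi x) (ψi v); rw [hββi, hψψi] at h; rw [← h, hψiψ]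
  have hφiρ₂ : ∀ v x, φi (ρ₂ v x) = ρ₂ (φi v) (αi x) := fun v x => by
    have h := hφρ₂ (φi v) (αi x); rw [hααi, hφφi] at h; rw [← h, hφiφ]
  have hψiρ₂ : ∀ v x, ψi (ρ₂ v x) = ρ₂ (ψi v) (βi x) := fun v x => by
    have h := hψρ₂ (ψi v) (βi x); rw [hββi, hψψi] at h; rw [← h, hψiψ]
  -- hop in general form
  have hop' : ∀ x y v, ρ₂ (ρ₁ x v) y = ρ₁ (α x) (ρ₂ v (βi y)) := fun x y v => by
    have h := hop x (βi y) v; rwa [hββi] at h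
  -- expansion forms of the special identities
  have hL : ∀ a b v, ρ₁ (μ a b) v
      = ρ₁ (α a) (ρ₁ b (ψi v)) + ρ₁ (β b) (ρ₁ (βi (α a)) (ψi v)) := fun a b v => by
    have h := hρ₁spec (βi a) (αi b) (ψi v)
    rw [hββi, hααi, hψψi, hαβi, hββi] at h; exact h
  have hR : ∀ a b v, ρ₂ v (μ a b)
      = ρ₂ (ρ₂ (φi v) a) (β b) + ρ₂ (ρ₂ (φi v) (β (αi b))) (α a) := fun a b v => by
    have h := hρ₂spec (βi a) (αi b) (φi v)
    rw [hφφi, hββi, hααi] at h; exact h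
  -- additivity / smul helpers
  have h1a : ∀ x u w, ρ₁ x (u + w) = ρ₁ x u + ρ₁ x w := fun x u w => (hρ₁.1 x).map_add u w
  have h1s : ∀ x u w, ρ₁ x (u - w) = ρ₁ x u - ρ₁ x w := fun x u w => (hρ₁.1 x).map_sub u w
  have h1m : ∀ (c : K) x u, ρ₁ x (c • u) = c • ρ₁ x u := fun c x u => (hρ₁.1 x).map_smul c u
  have h1aA : ∀ a b v, ρ₁ (a + b) v = ρ₁ a v + ρ₁ b v := fun a b v => (hρ₁.2 v).map_add a b
  have h1mA : ∀ (c : K) a v, ρ₁ (c • a) v = c • ρ₁ a v := fun c a v => (hρ₁.2 v).map_smul c a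
  have h2a : ∀ x u w, ρ₂ (u + w) x = ρ₂ u x + ρ₂ w x := fun x u w => (hρ₂.2 x).map_add u w
  have h2s : ∀ x u w, ρ₂ (u - w) x = ρ₂ u x - ρ₂ w x := fun x u w => (hρ₂.2 x).map_sub u w
  have h2m : ∀ (c : K) x u, ρ₂ (c • u) x = c • ρ₂ u x := fun c x u => (hρ₂.2 x).map_smul c u
  have h2aA : ∀ v a b, ρ₂ v (a + b) = ρ₂ v a + ρ₂ v b := fun v a b => (hρ₂.1 v).map_add a b
  have h2mA : ∀ (c : K) v a, ρ₂ v (c • a) = c • ρ₂ v a := fun c v a => (hρ₂.1 v).map_smul c a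
  have hφil : IsLinearMap K φi :=
    ⟨fun u w => injφ _ _ (by rw [hφφi, hφ.map_add, hφφi, hφφi]),
     fun c u => injφ _ _ (by rw [hφφi, hφ.map_smul, hφφi])⟩
  have hψil : IsLinearMap K ψi :=
    ⟨fun u w => injψ _ _ (by rw [hψψi, hψ.map_add, hψψi, hψψi]),
     fun c u => injψ _ _ (by rw [hψψi, hψ.map_smul, hψψi])⟩
  unfold IsBiHomJordanBimodule AreBiHomStructureMaps IsBilin
  refine ⟨⟨⟨fun m => ⟨fun u w => ?_, fun c u => ?_⟩, fun n => ⟨fun a b => ?_, fun c a => ?_⟩⟩,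
    ⟨fun m => ⟨fun a b => ?_, fun c a => ?_⟩, fun n => ⟨fun u w => ?_, fun c u => ?_⟩⟩,
    hφ, hψ, hφψ, fun x v => ?_, fun x v => ?_, fun v x => ?_, fun v x => ?_⟩,
    fun x v => ?_, fun x y z v => ?_, fun x y z v => ?_⟩
  · simp only [h1a, hφil.map_add, hψ.map_add, h2a]; abel
  · simp only [h1m, hφil.map_smul, hψ.map_smul, h2m, smul_add]
  · simp only [h1aA, hβi.map_add, hαl.map_add, h2aA]; abel
  · simp only [h1mA, hβi.map_smul, hαl.map_smul, h2mA, smul_add]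
  · simp only [hαi.map_add, hβl.map_add, h1aA, h2aA]; abel
  · simp only [hαi.map_smul, hβl.map_smul, h1mA, h2mA, smul_add]
  · simp only [hψil.map_add, hφ.map_add, h1a, h2a]; abel
  · simp only [hψil.map_smul, hφ.map_smul, h1m, h2m, smul_add]
  · -- φ (ρl x v) = ρl (α x) (φ v)
    simp only [hφ.map_add, hφρ₁, hφρ₂, hφψ, hφψi, hφiψ, hφiψi, hφφi, hφiφ, hψψi, hψiψ,
      hαβ, hαβi, hαiβ, hαiβi, hααi, hαiα, hββi, hβiβ]
  · -- ψ (ρl x v) = ρl (β x) (ψ v)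
    simp only [hψ.map_add, hψρ₁, hψρ₂, hφψ, hφψi, hφiψ, hφiψi, hφφi, hφiφ, hψψi, hψiψ,
      hαβ, hαβi, hαiβ, hαiβi, hααi, hαiα, hββi, hβiβ]
  · -- φ (ρr v x) = ρr (φ v) (α x)
    simp only [hφ.map_add, hφρ₁, hφρ₂, hφψ, hφψi, hφiψ, hφiψi, hφφi, hφiφ, hψψi, hψiψ,
      hαβ, hαβi, hαiβ, hαiβi, hααi, hαiα, hββi, hβiβ]
  · -- ψ (ρr v x) = ρr (ψ v) (β x)
    simp only [hψ.map_add, hψρ₁, hψρ₂, hφψ, hφψi, hφiψ, hφiψi, hφφi, hφiφ, hψψi, hψiψ,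
      hαβ, hαβi, hαiβ, hαiβi, hααi, hαiα, hββi, hβiβ]
  · -- ρl (β x) (φ v) = ρr (ψ v) (α x)
    simp only [hφψ, hφψi, hφiψ, hφiψi, hφφi, hφiφ, hψψi, hψiψ,
      hαβ, hαβi, hαiβ, hαiβi, hααi, hαiα, hββi, hβiβ]
  · -- cyclic asVm identity
    simp only [asVm, h1a, h1s, h2a, h2s, hφ.map_add, hφ.map_sub, hψ.map_add, hψ.map_sub,
      hφil.map_add, hφil.map_sub, hψil.map_add, hψil.map_sub,
      hαμ, hβμ, hαiμ, hβiμ,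
      hφρ₁, hψρ₁, hφρ₂, hψρ₂, hφiρ₁, hψiρ₁, hφiρ₂, hψiρ₂,
      hop', hL, hR,
      hφψ, hφψi, hφiψ, hφiψi, hφφi, hφiφ, hψψi, hψiψ,
      hαβ, hαβi, hαiβ, hαiβi, hααi, hαiα, hββi, hβiβ]
    abel
  · -- mixed asVr/asVl identity
    simp only [asVr, asVl, h1a, h1s, h2a, h2s, hφ.map_add, hφ.map_sub, hψ.map_add, hψ.map_sub,
      hφil.map_add, hφil.map_sub, hψil.map_add, hψil.map_sub,
      hαμ, hβμ, hαiμ, hβiμ,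
      hφρ₁, hψρ₁, hφρ₂, hψρ₂, hφiρ₁, hψiρ₁, hφiρ₂, hψiρ₂,
      hop', hL, hR,
      hφψ, hφψi, hφiψ, hφiψi, hφφi, hφiφ, hψψi, hψiψ,
      hαβ, hαβi, hαiβ, hαiβi, hααi, hαiα, hββi, hβiβ]
    abel
end
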